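/- arXiv:1601.01916 — 4 statements merged into one kernel-verified Lean document; each statement's English description precedes it below -/
import Mathlib

section
/- For every ω ∈ ℝ, every nonzero x ∈ ℝ², and every ξ ∈ ℝ², the weighted circular mean satisfies (1/(2π)) ∫₀^{2π} ⟨θ(s), ξ⟩ · exp(i·ω·⟨θ(s), x⟩) ds = i · ⟨x/‖x‖, ξ⟩ · J₁(ω‖x‖). -/
open MeasureTheory Real Filter
open scoped RealInnerProductSpace

/-- Bessel function of the first kind of order 0 (Bessel's integral). -/
noncomputable def J0 (u : ℝ) : ℝ := (1 / π) * ∫ τ in (0:ℝ)..π, Real.cos (u * Real.sin τ)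

/-- Bessel function of the first kind of order 1 (Bessel's integral). -/
noncomputable def J1 (u : ℝ) : ℝ := (1 / π) * ∫ τ in (0:ℝ)..π, Real.cos (τ - u * Real.sin τ)

/-- The unit direction `θ(s) = (cos s, sin s)` in `ℝ²`. -/
noncomputable def unitDir (s : ℝ) : EuclideanSpace ℝ (Fin 2) := WithLp.toLp 2 ![Real.cos s, Real.sin s]

/-! Write `x = ‖x‖ • θ(φ)`. Since the integrand is `2π`-periodic, substituting `s = t + φ` turns
`⟪θ(s), x⟫` into `‖x‖ cos t` and `⟪θ(s), ξ⟫` into `a cos t + b sin t` with `a = ⟪θ(φ), ξ⟫`.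
The `sin t` part integrates to zero under the reflection `t ↦ 2π - t`. For the `cos t` part, a
quarter turn followed by folding `[π, 2π]` onto `[0, π]` gives `2i ∫₀^π sin τ sin(u sin τ) dτ`
(`u = ω‖x‖`), which is `π J₁(u)` because the `cos τ cos(u sin τ)` part of `cos(τ - u sin τ)`
cancels under `τ ↦ π - τ`. -/

section

variable {E : Type*} [NormedAddCommGroup E] [NormedSpace ℝ E]

theorem integral_eq_zero_of_reflect_eq_neg {f : ℝ → E} {a b : ℝ}
    (h : ∀ x, f (a + b - x) = -f x) : ∫ x in a..b, f x = 0 := by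
  have h_neg := intervalIntegral.integral_comp_sub_left f (a + b) (a := a) (b := b)
  simp only [h, intervalIntegral.integral_neg, add_sub_cancel_right, add_sub_cancel_left,
    neg_eq_iff_add_eq_zero, ← two_smul ℝ, smul_eq_zero] at h_neg
  exact h_neg.resolve_left two_ne_zero

theorem integral_sin_smul_comp_cos_eq_zero (g : ℝ → E) :
    ∫ t in 0..2 * π, sin t • g (cos t) = 0 :=
  integral_eq_zero_of_reflect_eq_neg fun t => by
    rw [zero_add, sin_two_pi_sub, cos_two_pi_sub, neg_smul]

theorem integral_cos_smul_comp_sin_eq_zero (g : ℝ → E) :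
    ∫ t in 0..π, cos t • g (sin t) = 0 :=
  integral_eq_zero_of_reflect_eq_neg fun t => by
    rw [zero_add, cos_pi_sub, sin_pi_sub, neg_smul]

theorem Function.Periodic.intervalIntegral_comp_add_right {f : ℝ → E} {T : ℝ}
    (hf : Function.Periodic f T) (t s : ℝ) :
    ∫ x in t..t + T, f (x + s) = ∫ x in t..t + T, f x := by
  rw [intervalIntegral.integral_comp_add_right, add_right_comm, hf.intervalIntegral_add_eq]

theorem integral_zero_two_mul_eq_integral_add_comp_add {f : ℝ → E} (hf : Continuous f) (T : ℝ) :
    ∫ x in 0..2 * T, f x = ∫ x in 0..T, (f x + f (x + T)) := by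
  rw [intervalIntegral.integral_add (hf.intervalIntegrable _ _)
      (Continuous.intervalIntegrable (by fun_prop) _ _),
    intervalIntegral.integral_comp_add_right, zero_add, two_mul,
    intervalIntegral.integral_add_adjacent_intervals (hf.intervalIntegrable _ _)
      (hf.intervalIntegrable _ _)]

end

theorem pi_mul_J1_eq_integral_sin_mul_sin (u : ℝ) :
    π * J1 u = ∫ τ in 0..π, sin τ * sin (u * sin τ) := by
  have hcos := integral_cos_smul_comp_sin_eq_zero fun s => cos (u * s)
  simp only [smul_eq_mul] at hcos
  rw [J1, ← mul_assoc, mul_one_div_cancel pi_ne_zero, one_mul]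
  simp only [cos_sub]
  rw [intervalIntegral.integral_add (Continuous.intervalIntegrable (by fun_prop) _ _)
    (Continuous.intervalIntegrable (by fun_prop) _ _), hcos, zero_add]

theorem exp_mul_I_sub_exp_neg_mul_I (z : ℂ) :
    Complex.exp (z * Complex.I) - Complex.exp (-z * Complex.I) = 2 * Complex.I * Complex.sin z := by
  rw [Complex.exp_mul_I, Complex.exp_mul_I, Complex.cos_neg, Complex.sin_neg]
  ring

theorem integral_cos_mul_exp_I_mul_cos (u : ℝ) :
    ∫ t in 0..2 * π, (cos t : ℂ) * Complex.exp (Complex.I * u * cos t) =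
      2 * π * Complex.I * J1 u := by
  have hper : Function.Periodic (fun t : ℝ => (cos t : ℂ) * Complex.exp (Complex.I * u * cos t))
      (2 * π) := fun t => by simp only [cos_add_two_pi]
  calc ∫ t in 0..2 * π, (cos t : ℂ) * Complex.exp (Complex.I * u * cos t)
      = ∫ t in 0..2 * π, (sin t : ℂ) * Complex.exp (Complex.I * u * sin t) := by
        simpa only [zero_add, ← sub_eq_add_neg, cos_sub_pi_div_two]
          using (hper.intervalIntegral_comp_add_right 0 (-(π / 2))).symm
    _ = ∫ t in 0..π, 2 * Complex.I * ((sin t * sin (u * sin t) : ℝ) : ℂ) := by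
        rw [integral_zero_two_mul_eq_integral_add_comp_add (by fun_prop)]
        refine intervalIntegral.integral_congr fun t _ => ?_
        simp only [sin_add_pi]
        push_cast
        rw [show Complex.I * u * Complex.sin t = u * Complex.sin t * Complex.I by ring,
          show Complex.I * u * -Complex.sin t = -(u * Complex.sin t) * Complex.I by ring]
        linear_combination Complex.sin t * exp_mul_I_sub_exp_neg_mul_I (u * Complex.sin t)
    _ = 2 * π * Complex.I * J1 u := by
        rw [intervalIntegral.integral_const_mul, intervalIntegral.integral_ofReal,
          ← pi_mul_J1_eq_integral_sin_mul_sin]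
        push_cast
        ring

theorem integral_lincomb_mul_exp_I_mul_cos (a b u : ℝ) :
    ∫ t in 0..2 * π, ((a * cos t + b * sin t : ℝ) : ℂ) * Complex.exp (Complex.I * u * cos t) =
      2 * π * Complex.I * a * J1 u := by
  have hsin := integral_sin_smul_comp_cos_eq_zero fun c : ℝ => Complex.exp (Complex.I * u * c)
  simp only [Complex.real_smul] at hsin
  simp only [Complex.ofReal_add, Complex.ofReal_mul, add_mul, mul_assoc (a : ℂ), mul_assoc (b : ℂ)]
  rw [intervalIntegral.integral_add (Continuous.intervalIntegrable (by fun_prop) _ _)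
      (Continuous.intervalIntegrable (by fun_prop) _ _), intervalIntegral.integral_const_mul,
    intervalIntegral.integral_const_mul, integral_cos_mul_exp_I_mul_cos, hsin]
  ring

theorem unitDir_periodic : Function.Periodic unitDir (2 * π) := fun s => by
  simp only [unitDir, cos_add_two_pi, sin_add_two_pi]

theorem inner_unitDir_unitDir (s t : ℝ) : ⟪unitDir s, unitDir t⟫ = cos (s - t) := by
  simp only [unitDir, PiLp.inner_apply, RCLike.inner_apply, ringHom_apply, Fin.sum_univ_two,
    Matrix.cons_val_zero, Matrix.cons_val_one, Matrix.cons_val_fin_one, cos_sub]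
  ring

theorem unitDir_add (t φ : ℝ) :
    unitDir (t + φ) = cos t • unitDir φ + sin t • unitDir (φ + π / 2) := by
  ext i
  fin_cases i <;>
  · simp only [unitDir, Fin.zero_eta, Fin.mk_one, Matrix.cons_val_zero, Matrix.cons_val_one,
      Matrix.cons_val_fin_one, PiLp.add_apply, PiLp.smul_apply, smul_eq_mul, cos_add, sin_add,
      cos_pi_div_two, sin_pi_div_two]
    ring

theorem exists_eq_norm_smul_unitDir (x : EuclideanSpace ℝ (Fin 2)) :
    ∃ φ, x = ‖x‖ • unitDir φ := by
  set z := Complex.orthonormalBasisOneI.repr.symm x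
  have hz : ‖z‖ = ‖x‖ := LinearIsometryEquiv.norm_map _ x
  refine ⟨z.arg, ?_⟩
  ext i
  fin_cases i
  · simp [unitDir, ← hz, Complex.norm_mul_cos_arg, z]
  · simp [unitDir, ← hz, Complex.norm_mul_sin_arg, z]

/-- The weighted circular mean equals `i ⟨x/‖x‖, ξ⟩ J₁(ω‖x‖)`. -/
theorem weighted_circular_mean_eq_J1 (ω : ℝ) (x ξ : EuclideanSpace ℝ (Fin 2)) (hx : x ≠ 0) :
    (1 / (2 * (π : ℂ))) *
        ∫ s in (0:ℝ)..(2 * π),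
          ((⟪unitDir s, ξ⟫ : ℝ) : ℂ) *
            Complex.exp (Complex.I * (ω : ℂ) * ((⟪unitDir s, x⟫ : ℝ) : ℂ)) =
      Complex.I * ((⟪‖x‖⁻¹ • x, ξ⟫ : ℝ) : ℂ) * ((J1 (ω * ‖x‖) : ℝ) : ℂ) := by
  obtain ⟨φ, hφ⟩ := exists_eq_norm_smul_unitDir x
  have hdir : ‖x‖⁻¹ • x = unitDir φ := (inv_smul_eq_iff₀ (norm_ne_zero_iff.mpr hx)).mpr hφ
  have hrot := (unitDir_periodic.comp fun v => ((⟪v, ξ⟫ : ℝ) : ℂ) *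
    Complex.exp (Complex.I * ω * ((⟪v, x⟫ : ℝ) : ℂ))).intervalIntegral_comp_add_right 0 φ
  simp only [Function.comp_apply, zero_add] at hrot
  have hintegrand : ∀ t : ℝ, ((⟪unitDir (t + φ), ξ⟫ : ℝ) : ℂ) *
      Complex.exp (Complex.I * ω * ((⟪unitDir (t + φ), x⟫ : ℝ) : ℂ)) =
      ((⟪unitDir φ, ξ⟫ * cos t + ⟪unitDir (φ + π / 2), ξ⟫ * sin t : ℝ) : ℂ) *
        Complex.exp (Complex.I * ↑(ω * ‖x‖) * cos t) := fun t => by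
    have hx_polar : ⟪unitDir (t + φ), x⟫ = ⟪unitDir (t + φ), ‖x‖ • unitDir φ⟫ := by rw [← hφ]
    rw [hx_polar, real_inner_smul_right, inner_unitDir_unitDir, add_sub_cancel_right, unitDir_add,
      inner_add_left, real_inner_smul_left, real_inner_smul_left]
    push_cast
    ring_nf
  rw [← hrot, intervalIntegral.integral_congr fun t _ => hintegrand t,
    integral_lincomb_mul_exp_I_mul_cos, hdir]
  field_simp
end

section
/- J₀(u) tends to 0 as u → +∞; equivalently, the function u ↦ (1/π) ∫₀^π cos(u·sin τ) dτ tends to 0 along the filter at +∞. -/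
open MeasureTheory Real Filter
open scoped RealInnerProductSpace

/-!
Since `τ ↦ cos (u sin τ)` has period `π`, the integral over `[0, π]` equals the one over
`(-π/2, π/2)`, where the substitution `x = sin τ` turns it into
`∫_{-1}^{1} cos (u x) / √(1 - x²) dx`. The weight `(1 - x²)^(-1/2)` is integrable on
`(-1, 1)`, so this is the cosine transform of an integrable function, which tends to `0` by
the Riemann–Lebesgue lemma.
-/

open Set
open scoped FourierTransform

theorem tendsto_integral_cos_mul_atTop {f : ℝ → ℝ} (hf : Integrable f) :
    Tendsto (fun u => ∫ x, cos (u * x) * f x) atTop (nhds 0) := by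
  have hw : Tendsto (fun u : ℝ => u / (2 * π)) atTop (cocompact ℝ) :=
    (tendsto_id.atTop_div_const (by positivity)).mono_right atTop_le_cocompact
  have h := (Complex.continuous_re.tendsto 0).comp
    ((Real.tendsto_integral_exp_smul_cocompact fun x => (f x : ℂ)).comp hw)
  rw [Complex.zero_re] at h
  -- `cos (u x) f x` is the real part of `𝐞 (-(x * (u / (2π)))) • f x`.
  refine h.congr fun u => ?_
  have hint : Integrable (fun x : ℝ => 𝐞 (-(x * (u / (2 * π)))) • (f x : ℂ)) := by
    simpa [mul_comm] using (Real.fourierIntegral_convergent_iff (μ := volume)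
      (f := fun x => (f x : ℂ)) (u / (2 * π))).2 hf.ofReal
  have hre := integral_re hint
  simp only [RCLike.re_to_complex] at hre
  simp only [Function.comp_apply, ← hre]
  congr 1 with x
  rw [Circle.smul_def, Real.fourierChar_apply, smul_eq_mul, Complex.re_mul_ofReal,
    Complex.exp_ofReal_mul_I_re, ← cos_neg]
  congr 2
  field_simp

theorem tendsto_setIntegral_cos_mul_atTop {f : ℝ → ℝ} {s : Set ℝ} (hs : MeasurableSet s)
    (hf : IntegrableOn f s) :
    Tendsto (fun u => ∫ x in s, cos (u * x) * f x) atTop (nhds 0) := by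
  refine (tendsto_integral_cos_mul_atTop (hf.integrable_indicator hs)).congr fun u => ?_
  rw [← integral_indicator hs]
  simp only [indicator_mul_right]

theorem sin_image_Ioo : sin '' Ioo (-(π / 2)) (π / 2) = Ioo (-1) 1 :=
  sinPartialHomeomorph.image_source_eq_target

theorem abs_cos_mul_inv_sqrt_one_sub_sin_sq {τ : ℝ} (hτ : cos τ ≠ 0) :
    |cos τ| * (√(1 - sin τ ^ 2))⁻¹ = 1 := by
  rw [← abs_cos_eq_sqrt_one_sub_sin_sq]
  exact mul_inv_cancel₀ (abs_ne_zero.2 hτ)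

theorem injOn_sin_Ioo : InjOn sin (Ioo (-(π / 2)) (π / 2)) :=
  injOn_sin.mono Ioo_subset_Icc_self

theorem integrableOn_inv_sqrt_one_sub_sq :
    IntegrableOn (fun x : ℝ => (√(1 - x ^ 2))⁻¹) (Ioo (-1) 1) := by
  rw [← sin_image_Ioo, integrableOn_image_iff_integrableOn_abs_deriv_smul measurableSet_Ioo
    (fun τ _ => (hasDerivAt_sin τ).hasDerivWithinAt) injOn_sin_Ioo]
  refine (integrableOn_congr_fun (fun τ hτ => ?_) measurableSet_Ioo).2
    (integrableOn_const (C := (1 : ℝ)) measure_Ioo_lt_top.ne)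
  exact abs_cos_mul_inv_sqrt_one_sub_sin_sq (cos_pos_of_mem_Ioo hτ).ne'

theorem setIntegral_Ioo_cos_mul_sin_eq_cos_mul_inv_sqrt (u : ℝ) :
    ∫ τ in Ioo (-(π / 2)) (π / 2), cos (u * sin τ) =
      ∫ x in Ioo (-1) 1, cos (u * x) * (√(1 - x ^ 2))⁻¹ := by
  rw [← sin_image_Ioo, integral_image_eq_integral_abs_deriv_smul measurableSet_Ioo
    (fun τ _ => (hasDerivAt_sin τ).hasDerivWithinAt) injOn_sin_Ioo]
  refine setIntegral_congr_fun measurableSet_Ioo fun τ hτ => ?_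
  rw [smul_eq_mul, mul_left_comm, abs_cos_mul_inv_sqrt_one_sub_sin_sq (cos_pos_of_mem_Ioo hτ).ne',
    mul_one]

theorem intervalIntegral_cos_mul_sin_eq_setIntegral_Ioo (u : ℝ) :
    ∫ τ in (0 : ℝ)..π, cos (u * sin τ) =
      ∫ τ in Ioo (-(π / 2)) (π / 2), cos (u * sin τ) := by
  have hper : Function.Periodic (fun τ => cos (u * sin τ)) π := fun τ => by
    simp only [sin_add_pi, mul_neg, cos_neg]
  calc ∫ τ in (0 : ℝ)..π, cos (u * sin τ)
      = ∫ τ in (-(π / 2))..(-(π / 2) + π), cos (u * sin τ) := by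
        simpa using hper.intervalIntegral_add_eq 0 (-(π / 2))
    _ = _ := by
        rw [show -(π / 2) + π = π / 2 by ring,
          intervalIntegral.integral_of_le (by linarith [pi_pos]), integral_Ioc_eq_integral_Ioo]

theorem J0_eq_setIntegral (u : ℝ) :
    J0 u = 1 / π * ∫ x in Ioo (-1) 1, cos (u * x) * (√(1 - x ^ 2))⁻¹ := by
  rw [J0, intervalIntegral_cos_mul_sin_eq_setIntegral_Ioo,
    setIntegral_Ioo_cos_mul_sin_eq_cos_mul_inv_sqrt]

/-- `J₀(u) → 0` as `u → +∞`. -/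
theorem J0_tendsto_zero : Tendsto J0 atTop (nhds 0) := by
  rw [show J0 = _ from funext J0_eq_setIntegral]
  simpa using (tendsto_setIntegral_cos_mul_atTop measurableSet_Ioo
    integrableOn_inv_sqrt_one_sub_sq).const_mul (1 / π)
end

section
/- J₁(u) tends to 0 as u → +∞; equivalently, the function u ↦ (1/π) ∫₀^π cos(τ − u·sin τ) dτ tends to 0 along the filter at +∞. -/
/-!
Folding `[0, π]` at `π / 2` turns the integrand into `2 sin τ sin (u sin τ)`. On `(0, π / 2)` the
phase `sin` has nonvanishing derivative, so the substitution `y = sin τ` turns the integral into the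
sine transform of the integrable function `y / √(1 - y²)` on `(0, 1)`, which tends to `0` by the
Riemann–Lebesgue lemma.
-/

open MeasureTheory Real Filter
open scoped RealInnerProductSpace

open Set
open scoped FourierTransform Topology

theorem tendsto_setIntegral_mul_sin_cocompact {s : Set ℝ} (hs : MeasurableSet s) {f : ℝ → ℝ}
    (hf : IntegrableOn f s) :
    Tendsto (fun u => ∫ x in s, f x * sin (u * x)) (cocompact ℝ) (𝓝 0) := by
  -- `sin (u * x) = -(𝐞 (-(x * (u / 2π)))).im`, so this is the Riemann–Lebesgue lemma
  set F : ℝ → ℂ := fun x => ((s.indicator f x : ℝ) : ℂ)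
  have hF : Integrable F := ((integrable_indicator_iff hs).2 hf).ofReal
  have hscale : Tendsto (fun u : ℝ => u * (2 * π)⁻¹) (cocompact ℝ) (cocompact ℝ) :=
    tendsto_cocompact_mul_right₀ (inv_ne_zero two_pi_pos.ne')
  have hRL := (Real.tendsto_integral_exp_smul_cocompact F).comp hscale
  have him := ((Complex.continuous_im.tendsto 0).comp hRL).neg
  rw [Complex.zero_im, neg_zero] at him
  refine him.congr fun u => ?_
  have hint : Integrable fun x => 𝐞 (-(x * (u * (2 * π)⁻¹))) • F x :=
    (Real.fourierIntegral_convergent_iff' (ContinuousLinearMap.mul ℝ ℝ) _).2 hF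
  have hpt (x : ℝ) : (𝐞 (-(x * (u * (2 * π)⁻¹))) • F x).im = -(s.indicator f x * sin (u * x)) := by
    rw [Circle.smul_def, Real.fourierChar_apply, smul_eq_mul, Complex.im_mul_ofReal,
      show 2 * π * -(x * (u * (2 * π)⁻¹)) = -(u * x) by field_simp, Complex.exp_ofReal_mul_I_im,
      sin_neg]
    ring
  simp only [Function.comp_apply]
  rw [← Complex.imCLM_apply, ← Complex.imCLM.integral_comp_comm hint, ← integral_neg,
    ← integral_indicator hs]
  simp only [Complex.imCLM_apply, hpt, neg_neg, indicator_mul_left]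

theorem tendsto_setIntegral_mul_sin_comp_cocompact {s : Set ℝ} (hs : MeasurableSet s)
    {φ φ' : ℝ → ℝ} (hφ : ∀ x ∈ s, HasDerivWithinAt φ (φ' x) s x) (hφ' : ∀ x ∈ s, φ' x ≠ 0)
    (hinj : InjOn φ s) {g : ℝ → ℝ} (hg : IntegrableOn g s) :
    Tendsto (fun u => ∫ x in s, g x * sin (u * φ x)) (cocompact ℝ) (𝓝 0) := by
  -- the amplitude after the substitution `y = φ x`
  set h : ℝ → ℝ := fun y => g (Function.invFunOn φ s y) / |φ' (Function.invFunOn φ s y)|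
  have hgh : ∀ x ∈ s, |φ' x| • h (φ x) = g x := fun x hx => by
    simp only [h, hinj.leftInvOn_invFunOn hx, smul_eq_mul]
    exact mul_div_cancel₀ _ (abs_ne_zero.2 (hφ' x hx))
  have himage : MeasurableSet (φ '' s) :=
    hs.image_of_continuousOn_injOn (fun x hx => (hφ x hx).continuousWithinAt) hinj
  have hh : IntegrableOn h (φ '' s) := by
    rw [integrableOn_image_iff_integrableOn_abs_deriv_smul hs hφ hinj]
    exact hg.congr_fun (fun x hx => (hgh x hx).symm) hs
  refine (tendsto_setIntegral_mul_sin_cocompact himage hh).congr fun u => ?_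
  rw [integral_image_eq_integral_abs_deriv_smul hs hφ hinj]
  refine setIntegral_congr_fun hs fun x hx => ?_
  rw [← hgh x hx, smul_eq_mul, smul_eq_mul, mul_assoc]

theorem intervalIntegral_eq_integral_add_comp_sub {E : Type*} [NormedAddCommGroup E]
    [NormedSpace ℝ E] {f : ℝ → E} (hf : Continuous f) (a b : ℝ) :
    ∫ x in a..b, f x = ∫ x in a..(a + b) / 2, (f x + f (a + b - x)) := by
  have hrefl : Continuous fun x => f (a + b - x) := by fun_prop
  rw [intervalIntegral.integral_add (hf.intervalIntegrable _ _) (hrefl.intervalIntegrable _ _),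
    intervalIntegral.integral_comp_sub_left f, ← intervalIntegral.integral_add_adjacent_intervals
      (hf.intervalIntegrable a ((a + b) / 2)) (hf.intervalIntegrable _ b)]
  congr 2 <;> ring

theorem J1_eq_setIntegral_sin_mul_sin (u : ℝ) :
    J1 u = 2 / π * ∫ τ in Ioo 0 (π / 2), sin τ * sin (u * sin τ) := by
  have hfold (τ : ℝ) : cos (τ - u * sin τ) + cos (π - τ - u * sin (π - τ)) =
      2 * (sin τ * sin (u * sin τ)) := by
    rw [sin_pi_sub, show π - τ - u * sin τ = π - (τ + u * sin τ) by ring, cos_pi_sub,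
      cos_sub, cos_add]
    ring
  rw [J1, intervalIntegral_eq_integral_add_comp_sub (by fun_prop)]
  simp only [zero_add, hfold]
  rw [intervalIntegral.integral_const_mul, intervalIntegral.integral_of_le (by positivity),
    integral_Ioc_eq_integral_Ioo]
  ring

/-- `J₁(u) → 0` as `u → +∞`. -/
theorem J1_tendsto_zero : Tendsto J1 atTop (nhds 0) := by
  have hsin : Tendsto (fun u => ∫ τ in Ioo 0 (π / 2), sin τ * sin (u * sin τ)) atTop (𝓝 0) :=
    (tendsto_setIntegral_mul_sin_comp_cocompact measurableSet_Ioo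
      (fun τ _ => (hasDerivAt_sin τ).hasDerivWithinAt)
      (fun τ hτ => (cos_pos_of_mem_Ioo ⟨by linarith [hτ.1, pi_pos], hτ.2⟩).ne')
      (injOn_sin.mono (Ioo_subset_Icc_self.trans (Icc_subset_Icc (by linarith [pi_pos]) le_rfl)))
      (continuous_sin.integrableOn_Icc.mono_set Ioo_subset_Icc_self)).mono_left atTop_le_cocompact
  rw [funext J1_eq_setIntegral_sin_mul_sin]
  simpa only [mul_zero] using hsin.const_mul (2 / π)
end

section
/- For every y ∈ ℝ, the antiderivative identity ∫₀^y J₀(x)² dx = y·(J₀(y)² + J₁(y)²) + ∫₀^y J₁(x)² dx holds; equivalently, the function x ↦ x·(J₀(x)² + J₁(x)²) has derivative J₀(x)² − J₁(x)² at every x ∈ ℝ. -/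
open MeasureTheory Real Filter
open scoped RealInnerProductSpace

/-!
`J₀` and `J₁` are the Anger functions `angerJ ν z = (1/π) ∫₀^π cos (ν τ - z sin τ) dτ` at `ν = 0` and
`ν = 1`. Differentiating under the integral sign and using the product-to-sum formulas gives
`2 ∂_z angerJ ν = angerJ (ν - 1) - angerJ (ν + 1)`, while integrating the derivative of
`τ ↦ sin (ν τ - z sin τ)` over `[0, π]` gives
`z (angerJ (ν - 1) + angerJ (ν + 1)) = 2 ν angerJ ν - 2 sin (ν π) / π`. With the reflection
`τ ↦ π - τ`, which gives `angerJ (-1) = -angerJ 1`, these say `J₀' = -J₁` and `J₁ + z J₁' = z J₀`,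
so the derivative of `z (J₀² + J₁²)` is `J₀² + J₁² - 2 z J₀ J₁ + 2 J₁ (z J₀ - J₁) = J₀² - J₁²`.
-/

noncomputable def angerJ (ν z : ℝ) : ℝ := (1 / π) * ∫ τ in (0:ℝ)..π, cos (ν * τ - z * sin τ)

lemma J0_eq_angerJ_zero : J0 = angerJ 0 := by
  ext z
  simp only [J0, angerJ, zero_mul, zero_sub, cos_neg]

lemma J1_eq_angerJ_one : J1 = angerJ 1 := by
  ext z
  simp only [J1, angerJ, one_mul]

lemma angerJ_neg_intCast (n : ℤ) (z : ℝ) : angerJ (-n) z = (-1) ^ n * angerJ n z := by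
  have reflect (τ : ℝ) :
      cos (-n * (π - τ) - z * sin (π - τ)) = (-1) ^ n * cos (n * τ - z * sin τ) := by
    rw [sin_pi_sub, ← cos_sub_int_mul_pi]
    congr 1
    ring
  have reflected := intervalIntegral.integral_comp_sub_left (a := 0) (b := π)
    (fun τ => cos (-n * τ - z * sin τ)) π
  simp only [sub_self, sub_zero, reflect, intervalIntegral.integral_const_mul] at reflected
  rw [angerJ, angerJ, ← reflected]
  ring

lemma hasDerivAt_integral_cos_sub_mul_sin (ν z : ℝ) :
    HasDerivAt (fun z => ∫ τ in (0:ℝ)..π, cos (ν * τ - z * sin τ))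
      (∫ τ in (0:ℝ)..π, sin (ν * τ - z * sin τ) * sin τ) z := by
  refine (intervalIntegral.hasDerivAt_integral_of_dominated_loc_of_deriv_le
    (F := fun z τ => cos (ν * τ - z * sin τ)) (F' := fun z τ => sin (ν * τ - z * sin τ) * sin τ)
    (bound := fun _ => 1) univ_mem (.of_forall fun _ => by fun_prop)
    (Continuous.intervalIntegrable (by fun_prop) _ _) (by fun_prop)
    (.of_forall fun τ _ x _ => ?_) intervalIntegrable_const
    (.of_forall fun τ _ x _ => ?_)).2
  · rw [norm_mul, Real.norm_eq_abs, Real.norm_eq_abs]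
    exact mul_le_one₀ (abs_sin_le_one _) (abs_nonneg _) (abs_sin_le_one _)
  · exact ((hasDerivAt_mul_const (sin τ)).const_sub (ν * τ)).cos.congr_deriv (by ring)

lemma cos_sub_one_mul_sub_mul_sin (ν z τ : ℝ) : cos ((ν - 1) * τ - z * sin τ) =
    cos (ν * τ - z * sin τ) * cos τ + sin (ν * τ - z * sin τ) * sin τ := by
  rw [← cos_sub]
  ring_nf

lemma cos_add_one_mul_sub_mul_sin (ν z τ : ℝ) : cos ((ν + 1) * τ - z * sin τ) =
    cos (ν * τ - z * sin τ) * cos τ - sin (ν * τ - z * sin τ) * sin τ := by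
  rw [← cos_add]
  ring_nf

lemma hasDerivAt_angerJ (ν z : ℝ) :
    HasDerivAt (angerJ ν) ((angerJ (ν - 1) z - angerJ (ν + 1) z) / 2) z := by
  have product_to_sum (τ : ℝ) : sin (ν * τ - z * sin τ) * sin τ =
      (cos ((ν - 1) * τ - z * sin τ) - cos ((ν + 1) * τ - z * sin τ)) / 2 := by
    rw [cos_sub_one_mul_sub_mul_sin, cos_add_one_mul_sub_mul_sin]
    ring
  refine ((hasDerivAt_integral_cos_sub_mul_sin ν z).const_mul (1 / π)).congr_deriv ?_
  simp only [angerJ, product_to_sum, intervalIntegral.integral_div]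
  rw [intervalIntegral.integral_sub (Continuous.intervalIntegrable (by fun_prop) _ _)
    (Continuous.intervalIntegrable (by fun_prop) _ _)]
  ring

lemma mul_angerJ_sub_one_add_angerJ_add_one (ν z : ℝ) :
    z * (angerJ (ν - 1) z + angerJ (ν + 1) z) = 2 * ν * angerJ ν z - 2 * sin (ν * π) / π := by
  have product_to_sum (τ : ℝ) : (ν - z * cos τ) * cos (ν * τ - z * sin τ) =
      ν * cos (ν * τ - z * sin τ) -
        z / 2 * (cos ((ν - 1) * τ - z * sin τ) + cos ((ν + 1) * τ - z * sin τ)) := by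
    rw [cos_sub_one_mul_sub_mul_sin, cos_add_one_mul_sub_mul_sin]
    ring
  have ftc : ∫ τ in (0:ℝ)..π, (ν - z * cos τ) * cos (ν * τ - z * sin τ) = sin (ν * π) := by
    rw [intervalIntegral.integral_eq_sub_of_hasDerivAt (f := fun τ => sin (ν * τ - z * sin τ))
      (fun τ _ => ?_) (Continuous.intervalIntegrable (by fun_prop) _ _)]
    · simp
    · exact (((hasDerivAt_id' τ).const_mul ν).fun_sub
        ((hasDerivAt_sin τ).const_mul z)).sin.congr_deriv (by ring)
  simp only [product_to_sum] at ftc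
  rw [intervalIntegral.integral_sub (Continuous.intervalIntegrable (by fun_prop) _ _)
    (Continuous.intervalIntegrable (by fun_prop) _ _), intervalIntegral.integral_const_mul,
    intervalIntegral.integral_const_mul, intervalIntegral.integral_add
    (Continuous.intervalIntegrable (by fun_prop) _ _)
    (Continuous.intervalIntegrable (by fun_prop) _ _)] at ftc
  simp only [angerJ]
  linear_combination (-2 / π) * ftc

lemma continuous_angerJ (ν : ℝ) : Continuous (angerJ ν) :=
  continuous_iff_continuousAt.2 fun z => (hasDerivAt_angerJ ν z).continuousAt

lemma hasDerivAt_J0 (x : ℝ) : HasDerivAt J0 (-J1 x) x := by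
  have reflect := angerJ_neg_intCast 1 x
  rw [J0_eq_angerJ_zero, J1_eq_angerJ_one]
  refine (hasDerivAt_angerJ 0 x).congr_deriv ?_
  push_cast at reflect
  rw [zero_sub, zero_add, reflect]
  ring

lemma hasDerivAt_mul_sq_J0_add_sq_J1 (x : ℝ) :
    HasDerivAt (fun x => x * (J0 x ^ 2 + J1 x ^ 2)) (J0 x ^ 2 - J1 x ^ 2) x := by
  have hJ1 := hasDerivAt_angerJ 1 x
  have recurrence := mul_angerJ_sub_one_add_angerJ_add_one 1 x
  norm_num only [one_mul, sin_pi, ← J0_eq_angerJ_zero, ← J1_eq_angerJ_one] at hJ1 recurrence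
  refine ((hasDerivAt_id x).mul (((hasDerivAt_J0 x).pow 2).add (hJ1.pow 2))).congr_deriv ?_
  simp only [id, Pi.add_apply, Pi.pow_apply]
  linear_combination (-J1 x) * recurrence

/-- The antiderivative identity `∫₀^y J₀² = y (J₀(y)² + J₁(y)²) + ∫₀^y J₁²`; equivalently,
`x ↦ x (J₀(x)² + J₁(x)²)` has derivative `J₀(x)² − J₁(x)²` at every `x`. -/
theorem J0_sq_antiderivative :
    (∀ y : ℝ,
        ∫ x in (0:ℝ)..y, J0 x ^ 2 =
          y * (J0 y ^ 2 + J1 y ^ 2) + ∫ x in (0:ℝ)..y, J1 x ^ 2) ∧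
      ∀ x : ℝ,
        HasDerivAt (fun x : ℝ => x * (J0 x ^ 2 + J1 x ^ 2)) (J0 x ^ 2 - J1 x ^ 2) x := by
  refine ⟨fun y => ?_, hasDerivAt_mul_sq_J0_add_sq_J1⟩
  have hJ0 : Continuous fun x => J0 x ^ 2 := by
    rw [J0_eq_angerJ_zero]; exact (continuous_angerJ 0).pow 2
  have hJ1 : Continuous fun x => J1 x ^ 2 := by
    rw [J1_eq_angerJ_one]; exact (continuous_angerJ 1).pow 2
  have ftc := intervalIntegral.integral_eq_sub_of_hasDerivAt
    (fun x _ => hasDerivAt_mul_sq_J0_add_sq_J1 x) ((hJ0.sub hJ1).intervalIntegrable 0 y)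
  rw [intervalIntegral.integral_sub (hJ0.intervalIntegrable 0 y) (hJ1.intervalIntegrable 0 y)]
    at ftc
  linear_combination ftc
end
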